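/- Let k ≥ 2, let C_k be the set of cyclically reduced words in F(a_1,...,a_k), and let P_k ⊆ C_k with genericity entropy t := limsup_{n→∞} log γ(n, C_k \ P_k) / (n log(2k-1)) < 1. Then for any 0 < d < 1 - t, setting m_n = ⌊(2k-1)^{dn}⌋, the fraction of m_n-tuples of cyclically reduced words of length n all of whose entries lie in P_k, among all m_n-tuples of cyclically reduced words of length n, tends to 1 as n → ∞. -/

import Mathlib

open Filter

/-- The alphabet `{a_1,...,a_k}^{±1}` of the free group `F(a_1,...,a_k)`. -/
abbrev Letter (k : ℕ) := Fin k × Bool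

/-- Formal inverse of a letter. -/
def linv {k : ℕ} (x : Letter k) : Letter k := (x.1, !x.2)

/-- A word is freely reduced if no letter is followed by its inverse. -/
def Reduced {k : ℕ} (w : List (Letter k)) : Prop :=
  w.Chain' (fun x y => y ≠ linv x)

/-- A word is cyclically reduced if all its cyclic permutations are reduced. -/
def CyclRed {k : ℕ} (w : List (Letter k)) : Prop :=
  ∀ r : ℕ, Reduced (w.rotate r)

/-- The set of cyclically reduced words in `F(a_1,...,a_k)`. -/
def Ck (k : ℕ) : Set (List (Letter k)) := {w | CyclRed w}

/-- `gam Q n` is the number of words of length `n` in `Q`. -/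
noncomputable def gam {k : ℕ} (Q : Set (List (Letter k))) (n : ℕ) : ℕ :=
  Nat.card {w : List (Letter k) // w ∈ Q ∧ w.length = n}

/-! Write `B n = γ(n, C_k \ P)`, `C n = γ(n, C_k)` and `m n = ⌊(2k-1)^{dn}⌋`. Since `P ⊆ C_k`,
the fraction equals `(1 - B n / C n) ^ m n`, which Bernoulli's inequality bounds below by
`1 - m n * B n / C n`. Pick `s` with `t < s < 1 - d`: the limsup gives `B n ≤ (2k-1)^{sn}`
eventually, while `C n ≥ c (2k-1)^n` because a cyclically reduced word can be built letter
by letter with `2k-1` choices at each step (`2k-2` for the last letter, which must cancel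
neither its predecessor nor the first letter). Hence `m n * B n / C n ≤ c⁻¹ (2k-1)^{(d+s-1)n}`
tends to `0`. -/

open Topology

theorem tendsto_one_sub_pow_of_tendsto_mul {ι : Type*} {l : Filter ι} {u : ι → ℝ} {m : ι → ℕ}
    (hu : ∀ i, u i ∈ Set.Icc 0 1) (h : Tendsto (fun i => m i * u i) l (𝓝 0)) :
    Tendsto (fun i => (1 - u i) ^ m i) l (𝓝 1) := by
  have hlower : Tendsto (fun i => 1 - m i * u i) l (𝓝 1) := by
    simpa using h.const_sub 1
  refine tendsto_of_tendsto_of_tendsto_of_le_of_le hlower tendsto_const_nhds (fun i => ?_)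
    fun i => pow_le_one₀ (by linarith [(hu i).2]) (by linarith [(hu i).1])
  simpa [sub_eq_add_neg] using one_add_mul_le_pow (a := -u i) (by linarith [(hu i).2]) (m i)

theorem isBoundedUnder_log_div_of_le_pow {b : ℕ → ℕ} {M : ℕ} (hb : ∀ n, b n ≤ M ^ n)
    {c : ℝ} (hc : 0 < c) :
    IsBoundedUnder (· ≤ ·) atTop fun n : ℕ => Real.log (b n) / (n * c) := by
  refine isBoundedUnder_of ⟨Real.log M / c, fun n => ?_⟩
  have hM : 0 ≤ Real.log M / c := div_nonneg (Real.log_natCast_nonneg M) hc.le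
  rcases Nat.eq_zero_or_pos (b n) with hbn | hbn
  · simpa [hbn] using hM
  rcases Nat.eq_zero_or_pos n with rfl | hn
  · simpa using hM
  have hlog : Real.log (b n) ≤ n * Real.log M := by
    rw [← Real.log_pow]
    exact Real.log_le_log (by exact_mod_cast hbn) (by exact_mod_cast hb n)
  rw [div_le_div_iff₀ (by positivity) hc]
  nlinarith

theorem eventually_le_pow_of_limsup_lt {b : ℕ → ℝ} {lam s : ℝ} (hb : ∀ n, 0 ≤ b n)
    (hlam : 1 < lam)
    (hbdd : IsBoundedUnder (· ≤ ·) atTop fun n : ℕ => Real.log (b n) / (n * Real.log lam))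
    (hs : limsup (fun n : ℕ => Real.log (b n) / (n * Real.log lam)) atTop < s) :
    ∀ᶠ n in atTop, b n ≤ (lam ^ s) ^ n := by
  have hloglam : 0 < Real.log lam := Real.log_pos hlam
  filter_upwards [eventually_lt_of_limsup_lt hs hbdd, eventually_ge_atTop 1] with n hn hn1
  rcases (hb n).eq_or_lt with hbn | hbn
  · rw [← hbn]; positivity
  have hn1' : (1 : ℝ) ≤ n := by exact_mod_cast hn1
  rw [div_lt_iff₀ (by positivity)] at hn
  rw [← Real.log_le_log_iff hbn (by positivity), Real.log_pow, Real.log_rpow (by linarith)]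
  linarith

theorem tendsto_mul_div_of_le_pow {m : ℕ → ℕ} {b C : ℕ → ℝ} {p q r c : ℝ} (hp : 0 ≤ p)
    (hq : 0 ≤ q) (hpq : p * q < r) (hc : 0 < c) (hb : ∀ n, 0 ≤ b n)
    (hm : ∀ᶠ n in atTop, m n ≤ p ^ n) (hbq : ∀ᶠ n in atTop, b n ≤ q ^ n)
    (hC : ∀ᶠ n in atTop, c * r ^ n ≤ C n) :
    Tendsto (fun n => m n * (b n / C n)) atTop (𝓝 0) := by
  have hr : 0 < r := by nlinarith
  have hlim : Tendsto (fun n : ℕ => c⁻¹ * (p * q / r) ^ n) atTop (𝓝 0) := by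
    simpa using ((tendsto_pow_atTop_nhds_zero_of_lt_one (by positivity)
      ((div_lt_one hr).mpr hpq)).const_mul c⁻¹)
  have hCpos : ∀ᶠ n in atTop, 0 < C n :=
    hC.mono fun n hn => (by positivity : 0 < c * r ^ n).trans_le hn
  refine squeeze_zero' ?_ ?_ hlim
  · filter_upwards [hCpos] with n hn
    have := hb n
    positivity
  filter_upwards [hm, hbq, hC, hCpos] with n hmn hbn hCn hCn'
  calc (m n : ℝ) * (b n / C n) ≤ p ^ n * (q ^ n / (c * r ^ n)) := by
        have := hb n
        gcongr
    _ = c⁻¹ * (p * q / r) ^ n := by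
        rw [div_pow, mul_pow]
        field_simp

noncomputable def Finset.finEmbOfLeCard {α : Type*} {n : ℕ} (s : Finset α) (h : n ≤ s.card) :
    Fin n ↪ α :=
  (Fin.castLEEmb h).trans (s.equivFin.symm.toEmbedding.trans (Function.Embedding.subtype _))

theorem Finset.finEmbOfLeCard_mem {α : Type*} {n : ℕ} (s : Finset α) (h : n ≤ s.card)
    (i : Fin n) : s.finEmbOfLeCard h i ∈ s :=
  (s.equivFin.symm _).2

theorem List.rotate_infix_append_self {α : Type*} (l : List α) (n : ℕ) :
    l.rotate n <:+: l ++ l := by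
  rw [rotate_eq_drop_append_take_mod]
  exact ⟨l.take (n % l.length), l.drop (n % l.length), by
    rw [← append_assoc, take_append_drop, append_assoc, take_append_drop]⟩

section Words

open Finset

variable {k : ℕ}

theorem linv_linv (x : Letter k) : linv (linv x) = x := by
  simp [linv]

theorem cyclRed_of_reduced {w : List (Letter k)} (hw : Reduced w)
    (hends : ∀ x ∈ w.head?, ∀ y ∈ w.getLast?, x ≠ linv y) : CyclRed w := by
  have hww : Reduced (w ++ w) :=
    List.isChain_append.mpr ⟨hw, hw, fun y hy x hx => hends x hx y hy⟩
  exact fun r => hww.infix (w.rotate_infix_append_self r)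

theorem card_univ_erase_letter (y : Letter k) : #(univ.erase y) = 2 * k - 1 := by
  rw [card_erase_of_mem (mem_univ y), card_univ]
  simp [mul_comm]

noncomputable def follower (x : Letter k) : Fin (2 * k - 1) ↪ Letter k :=
  (univ.erase (linv x)).finEmbOfLeCard (card_univ_erase_letter _).ge

theorem follower_ne (x : Letter k) (i : Fin (2 * k - 1)) : follower x i ≠ linv x :=
  ne_of_mem_erase (finEmbOfLeCard_mem _ _ i)

noncomputable def closer (a x : Letter k) : Fin (2 * k - 2) ↪ Letter k :=
  ((univ.erase (linv x)).erase (linv a)).finEmbOfLeCard <| by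
    have := pred_card_le_card_erase (s := univ.erase (linv x)) (a := linv a)
    rw [card_univ_erase_letter] at this
    omega

theorem closer_ne_left (a x : Letter k) (j : Fin (2 * k - 2)) : closer a x j ≠ linv x :=
  ne_of_mem_erase (mem_of_mem_erase (finEmbOfLeCard_mem _ _ j))

theorem closer_ne_right (a x : Letter k) (j : Fin (2 * k - 2)) : closer a x j ≠ linv a :=
  ne_of_mem_erase (finEmbOfLeCard_mem _ _ j)

noncomputable def choiceWord (a : Letter k) :
    Letter k → List (Fin (2 * k - 1)) → Fin (2 * k - 2) → List (Letter k)
  | x, [], j => [x, closer a x j]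
  | x, i :: l, j => x :: choiceWord a (follower x i) l j

variable (a : Letter k)

@[simp]
theorem length_choiceWord (x : Letter k) (l : List (Fin (2 * k - 1))) (j : Fin (2 * k - 2)) :
    (choiceWord a x l j).length = l.length + 2 := by
  induction l generalizing x with
  | nil => rfl
  | cons i l ih => simp [choiceWord, ih]

@[simp]
theorem head?_choiceWord (x : Letter k) (l : List (Fin (2 * k - 1))) (j : Fin (2 * k - 2)) :
    (choiceWord a x l j).head? = some x := by
  cases l <;> rfl

theorem getLast?_choiceWord (x : Letter k) (l : List (Fin (2 * k - 1))) (j : Fin (2 * k - 2)) :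
    ∃ y, (choiceWord a x l j).getLast? = some (closer a y j) := by
  induction l generalizing x with
  | nil => exact ⟨x, rfl⟩
  | cons i l ih =>
    obtain ⟨y, hy⟩ := ih (follower x i)
    refine ⟨y, ?_⟩
    rw [choiceWord, List.getLast?_cons, hy]
    rfl

theorem reduced_choiceWord (x : Letter k) (l : List (Fin (2 * k - 1))) (j : Fin (2 * k - 2)) :
    Reduced (choiceWord a x l j) := by
  induction l generalizing x with
  | nil => exact List.isChain_pair.mpr (closer_ne_left a x j)
  | cons i l ih =>
    refine List.isChain_cons.mpr ⟨?_, ih (follower x i)⟩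
    rintro y hy
    rw [head?_choiceWord, Option.mem_some_iff] at hy
    exact hy ▸ follower_ne x i

theorem cyclRed_choiceWord (l : List (Fin (2 * k - 1))) (j : Fin (2 * k - 2)) :
    CyclRed (choiceWord a a l j) := by
  refine cyclRed_of_reduced (reduced_choiceWord a a l j) fun x hx y hy => ?_
  obtain ⟨z, hz⟩ := getLast?_choiceWord a a l j
  rw [head?_choiceWord, Option.mem_some_iff] at hx
  rw [hz, Option.mem_some_iff] at hy
  subst hx hy
  exact fun h => closer_ne_right a z j ((congrArg linv h).trans (linv_linv _)).symm

theorem choiceWord_inj {x : Letter k} {l l' : List (Fin (2 * k - 1))} {j j' : Fin (2 * k - 2)}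
    (h : choiceWord a x l j = choiceWord a x l' j') : l = l' ∧ j = j' := by
  induction l generalizing x l' with
  | nil =>
    cases l' with
    | nil => exact ⟨rfl, (closer a x).injective (by simpa [choiceWord] using h)⟩
    | cons => simpa using congrArg List.length h
  | cons i l ih =>
    cases l' with
    | nil => simpa using congrArg List.length h
    | cons i' l' =>
      obtain ⟨-, h⟩ := List.cons_eq_cons.mp h
      have hi : i = i' := (follower x).injective <| by
        simpa using congrArg List.head? h
      subst hi
      obtain ⟨rfl, rfl⟩ := ih h
      exact ⟨rfl, rfl⟩

end Words

section Counting

variable {k : ℕ}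

theorem gam_eq_ncard (Q : Set (List (Letter k))) (n : ℕ) :
    gam Q n = (Q ∩ {w | w.length = n}).ncard := rfl

theorem gam_sdiff_add_gam {P Q : Set (List (Letter k))} (hPQ : P ⊆ Q) (n : ℕ) :
    gam (Q \ P) n + gam P n = gam Q n := by
  simp only [gam_eq_ncard, Set.inter_sdiff_distrib_right]
  exact Set.ncard_sdiff_add_ncard_of_subset (Set.inter_subset_inter_left _ hPQ)
    ((List.finite_length_eq _ n).inter_of_right Q)

theorem gam_div_gam_mem_Icc {P Q : Set (List (Letter k))} (hPQ : P ⊆ Q) (n : ℕ) :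
    (gam P n : ℝ) / gam Q n ∈ Set.Icc 0 1 := by
  have hle : gam P n ≤ gam Q n := (gam_sdiff_add_gam hPQ n).le.trans' le_add_self
  exact ⟨by positivity, div_le_one_of_le₀ (by exact_mod_cast hle) (by positivity)⟩

theorem gam_div_gam_eq_one_sub {P Q : Set (List (Letter k))} (hPQ : P ⊆ Q) {n : ℕ}
    (hQ : gam Q n ≠ 0) : (gam P n : ℝ) / gam Q n = 1 - gam (Q \ P) n / gam Q n := by
  rw [eq_sub_iff_add_eq, ← add_div, div_eq_one_iff_eq (by exact_mod_cast hQ)]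
  exact_mod_cast (add_comm _ _).trans (gam_sdiff_add_gam hPQ n)

theorem gam_le_pow (Q : Set (List (Letter k))) (n : ℕ) : gam Q n ≤ (k * 2) ^ n := by
  have : Nat.card (List.Vector (Letter k) n) = (k * 2) ^ n := by
    simp [Nat.card_eq_fintype_card, card_vector]
  rw [← this]
  exact Nat.card_le_card_of_injective (fun w => ⟨w.1, w.2.2⟩)
    fun w w' h => Subtype.ext (congrArg Subtype.val h :)

theorem pow_mul_le_gam_Ck (a : Letter k) {n : ℕ} (hn : 2 ≤ n) :
    (2 * k - 1) ^ (n - 2) * (2 * k - 2) ≤ gam (Ck k) n := by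
  have : Finite {w : List (Letter k) // w ∈ Ck k ∧ w.length = n} :=
    Set.Finite.to_subtype ((List.finite_length_eq _ n).subset fun _ hw => hw.2)
  let f (p : List.Vector (Fin (2 * k - 1)) (n - 2) × Fin (2 * k - 2)) :
      {w : List (Letter k) // w ∈ Ck k ∧ w.length = n} :=
    ⟨choiceWord a a p.1.1 p.2, cyclRed_choiceWord a _ _, by simp [p.1.2]; omega⟩
  have hf : f.Injective := fun p q h => by
    obtain ⟨h1, h2⟩ := choiceWord_inj a (congrArg Subtype.val h)
    exact Prod.ext (Subtype.ext h1) h2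
  simpa [Nat.card_eq_fintype_card, card_vector, gam] using Nat.card_le_card_of_injective f hf

theorem eventually_mul_pow_le_gam_Ck (a : Letter k) :
    ∀ᶠ n in atTop, (2 * k - 2 : ℝ) / (2 * k - 1) ^ 2 * (2 * k - 1) ^ n ≤ gam (Ck k) n := by
  have hk : 1 ≤ k := a.1.pos
  filter_upwards [eventually_ge_atTop 2] with n hn
  have hlam : (0 : ℝ) < 2 * k - 1 := by
    have : (1 : ℝ) ≤ k := by exact_mod_cast hk
    linarith
  have hcount := pow_mul_le_gam_Ck a hn
  rw [← Nat.cast_le (α := ℝ)] at hcount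
  push_cast [Nat.cast_sub (by omega : 1 ≤ 2 * k), Nat.cast_sub (by omega : 2 ≤ 2 * k)] at hcount
  calc (2 * k - 2 : ℝ) / (2 * k - 1) ^ 2 * (2 * k - 1) ^ n
      = (2 * k - 1 : ℝ) ^ (n - 2) * (2 * k - 2) := by
        rw [← pow_sub_mul_pow _ hn]
        field_simp
    _ ≤ gam (Ck k) n := hcount

end Counting

theorem stmt4_general (k : ℕ) (hk : 2 ≤ k) (P : Set (List (Letter k))) (hP : P ⊆ Ck k)
    (t d : ℝ)
    (ht : t = limsup (fun n : ℕ =>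
      Real.log (gam (Ck k \ P) n) / (n * Real.log (2 * (k : ℝ) - 1))) atTop)
    (hd1 : d < 1 - t) :
    Tendsto (fun n : ℕ =>
        ((gam P n : ℝ) ^ ⌊(2 * (k : ℝ) - 1) ^ (d * n)⌋₊) /
          ((gam (Ck k) n : ℝ) ^ ⌊(2 * (k : ℝ) - 1) ^ (d * n)⌋₊))
      atTop (nhds 1) := by
  set lam : ℝ := 2 * k - 1
  have hk' : (2 : ℝ) ≤ k := by exact_mod_cast hk
  have hlam : 1 < lam := by linarith
  have hc : (0 : ℝ) < (2 * k - 2) / lam ^ 2 := div_pos (by linarith) (by positivity)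
  obtain ⟨s, hts, hds⟩ : ∃ s, t < s ∧ d + s < 1 := ⟨(1 + t - d) / 2, by linarith, by linarith⟩
  have hB : ∀ᶠ n in atTop, (gam (Ck k \ P) n : ℝ) ≤ (lam ^ s) ^ n :=
    eventually_le_pow_of_limsup_lt (fun n => by positivity) hlam
      (isBoundedUnder_log_div_of_le_pow (gam_le_pow _) (Real.log_pos hlam)) (ht ▸ hts)
  have hC := eventually_mul_pow_le_gam_Ck (k := k) (⟨0, by omega⟩, true)
  have hm (n : ℕ) : (⌊lam ^ (d * n)⌋₊ : ℝ) ≤ (lam ^ d) ^ n := by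
    rw [← Real.rpow_mul_natCast (by linarith)]
    exact Nat.floor_le (by positivity)
  have hpq : lam ^ d * lam ^ s < lam := by
    rw [← Real.rpow_add (by linarith)]
    simpa using Real.rpow_lt_rpow_of_exponent_lt hlam hds
  have hdecay := tendsto_mul_div_of_le_pow (by positivity) (by positivity) hpq hc
    (fun n => by positivity) (.of_forall hm) hB hC
  refine (tendsto_one_sub_pow_of_tendsto_mul (fun n => gam_div_gam_mem_Icc Set.sdiff_subset n)
    hdecay).congr' ?_
  filter_upwards [hC] with n hn
  have hCpos : (0 : ℝ) < gam (Ck k) n := (by positivity : (0 : ℝ) < _).trans_le hn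
  rw [← div_pow, gam_div_gam_eq_one_sub hP (by exact_mod_cast hCpos.ne')]

/-- If P ⊆ C_k has genericity entropy t < 1 and 0 < d < 1 - t, then the fraction of
m_n-tuples (m_n = ⌊(2k-1)^{dn}⌋) of length-n cyclically reduced words all of whose
entries lie in P tends to 1. -/
theorem stmt4 (k : ℕ) (hk : 2 ≤ k) (P : Set (List (Letter k))) (hP : P ⊆ Ck k)
    (t d : ℝ)
    (ht : t = limsup (fun n : ℕ =>
      Real.log (gam (Ck k \ P) n) / (n * Real.log (2 * (k : ℝ) - 1))) atTop)
    (ht1 : t < 1) (hd0 : 0 < d) (hd1 : d < 1 - t) :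
    Tendsto (fun n : ℕ =>
        ((gam P n : ℝ) ^ ⌊(2 * (k : ℝ) - 1) ^ (d * n)⌋₊) /
          ((gam (Ck k) n : ℝ) ^ ⌊(2 * (k : ℝ) - 1) ^ (d * n)⌋₊))
      atTop (nhds 1) :=
  stmt4_general k hk P hP t d ht hd1
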